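/- For every complex matrix σ indexed by Fin d₁ × Fin d₂ (an operator on ℂ^{d₁} ⊗ ℂ^{d₂}), define α(σ) := inf { Σᵢ λᵢ ‖Sᵢ‖_γ : σ = Σᵢ λᵢ Sᵢ, a finite sum with λᵢ ≥ 0 and each Sᵢ a matrix of rank 1 }. Then α(σ) = ‖σ‖_γ. -/

import Mathlib

open scoped Matrix Kronecker BigOperators ComplexOrder
open MeasureTheory

/-- Trace norm of a complex square matrix: `tr √(AᴴA)` (the sum of singular values). -/
noncomputable def traceNorm {n : Type*} [Fintype n] [DecidableEq n] (A : Matrix n n ℂ) : ℝ :=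
  (((Matrix.posSemidef_conjTranspose_mul_self A).1.eigenvectorUnitary : Matrix n n ℂ) *
      Matrix.diagonal ((fun x : ℝ => (x : ℂ)) ∘ (√·) ∘ (Matrix.posSemidef_conjTranspose_mul_self A).1.eigenvalues) *
      (star (Matrix.posSemidef_conjTranspose_mul_self A).1.eigenvectorUnitary : Matrix n n ℂ)).trace.re

/-- The greatest cross norm `‖·‖_γ` of an operator on `ℂ^{d₁} ⊗ ℂ^{d₂}`: the infimum of
`Σᵢ ‖uᵢ‖₁ ‖vᵢ‖₁` over all finite decompositions `T = Σᵢ uᵢ ⊗ vᵢ` into Kronecker products. -/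
noncomputable def gcn {d₁ d₂ : ℕ} (T : Matrix (Fin d₁ × Fin d₂) (Fin d₁ × Fin d₂) ℂ) : ℝ :=
  sInf { r : ℝ | ∃ (n : ℕ) (u : Fin n → Matrix (Fin d₁) (Fin d₁) ℂ)
      (v : Fin n → Matrix (Fin d₂) (Fin d₂) ℂ),
      T = ∑ i, u i ⊗ₖ v i ∧ r = ∑ i, traceNorm (u i) * traceNorm (v i) }

/-- A density matrix: positive semidefinite with trace one. -/
def IsDensityMatrix {n : Type*} [Fintype n] (ρ : Matrix n n ℂ) : Prop :=
  ρ.PosSemidef ∧ ρ.trace = 1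

/-- Separability of a state on `ℂ^{d₁} ⊗ ℂ^{d₂}`: a finite convex-type combination
`ρ = Σᵢ ωᵢ ρᵢ⁽¹⁾ ⊗ ρᵢ⁽²⁾` of Kronecker products of density matrices, with `ωᵢ ≥ 0`. -/
def IsSeparable' {d₁ d₂ : ℕ} (ρ : Matrix (Fin d₁ × Fin d₂) (Fin d₁ × Fin d₂) ℂ) : Prop :=
  ∃ (n : ℕ) (ω : Fin n → ℝ) (ρ₁ : Fin n → Matrix (Fin d₁) (Fin d₁) ℂ)
    (ρ₂ : Fin n → Matrix (Fin d₂) (Fin d₂) ℂ),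
    (∀ i, 0 ≤ ω i) ∧ (∀ i, IsDensityMatrix (ρ₁ i)) ∧ (∀ i, IsDensityMatrix (ρ₂ i)) ∧
    ρ = ∑ i, (ω i : ℂ) • (ρ₁ i ⊗ₖ ρ₂ i)

/-- The realignment map `𝔄`: `𝔄(ρ)_{(i,j),(k,l)} = ρ_{(i,k),(j,l)}`. -/
def realign {d : ℕ} (ρ : Matrix (Fin d × Fin d) (Fin d × Fin d) ℂ) :
    Matrix (Fin d × Fin d) (Fin d × Fin d) ℂ :=
  Matrix.of fun p q => ρ (p.1, q.1) (p.2, q.2)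

/-- `τ(𝔄(ρ))`: the trace norm of the realignment of `ρ`. -/
noncomputable def tauRealign {d : ℕ} (ρ : Matrix (Fin d × Fin d) (Fin d × Fin d) ℂ) : ℝ :=
  traceNorm (realign ρ)

/-- The flip operator `𝔽 = Σ_{i,j} |i⊗j⟩⟨j⊗i|` on `ℂ^d ⊗ ℂ^d`. -/
def flipOp (d : ℕ) : Matrix (Fin d × Fin d) (Fin d × Fin d) ℂ :=
  Matrix.of fun p q => if p.1 = q.2 ∧ p.2 = q.1 then 1 else 0

/-- The Werner state `ρ_f = (1/(d³−d))((d−f) I + (df−1) 𝔽)` on `ℂ^d ⊗ ℂ^d`. -/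
noncomputable def wernerState (d : ℕ) (f : ℝ) : Matrix (Fin d × Fin d) (Fin d × Fin d) ℂ :=
  (((d : ℂ) ^ 3 - d)⁻¹) • (((d : ℂ) - (f : ℂ)) • (1 : Matrix (Fin d × Fin d) (Fin d × Fin d) ℂ)
    + ((d : ℂ) * (f : ℂ) - 1) • flipOp d)

/-- The maximally entangled vector `|Ψ⁺⟩ = (1/√d) Σᵢ |i⊗i⟩` on `ℂ^d ⊗ ℂ^d`. -/
noncomputable def psiPlus (d : ℕ) : Fin d × Fin d → ℂ :=
  fun p => if p.1 = p.2 then ((1 / Real.sqrt d : ℝ) : ℂ) else 0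

/-- The isotropic state `ρ_F = ((1−F)/(d²−1))(I − |Ψ⁺⟩⟨Ψ⁺|) + F |Ψ⁺⟩⟨Ψ⁺|` on `ℂ^d ⊗ ℂ^d`. -/
noncomputable def isotropicState (d : ℕ) (F : ℝ) : Matrix (Fin d × Fin d) (Fin d × Fin d) ℂ :=
  (((1 - F : ℝ) : ℂ) / ((d : ℂ) ^ 2 - 1)) •
      ((1 : Matrix (Fin d × Fin d) (Fin d × Fin d) ℂ)
        - Matrix.vecMulVec (psiPlus d) (star (psiPlus d)))
    + ((F : ℝ) : ℂ) • Matrix.vecMulVec (psiPlus d) (star (psiPlus d))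


set_option linter.unusedSectionVars false

namespace Aux
open Matrix Complex
open scoped MatrixOrder

section NN
variable {n m : Type*} [Fintype n] [DecidableEq n] [Fintype m] [DecidableEq m]

lemma psd_diag_nonneg {M : Matrix n n ℂ} (h : M.PosSemidef) (i : n) : 0 ≤ (M i i).re := by
  have h2 := h.dotProduct_mulVec_nonneg (Pi.single i 1)
  have : dotProduct (star (Pi.single i 1 : n → ℂ)) (M *ᵥ Pi.single i 1) = M i i := by
    simp [dotProduct, Matrix.mulVec_single, Pi.single_apply, apply_ite]
  rw [this] at h2
  exact (Complex.nonneg_iff.mp h2).1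

lemma psd_trace_re_nonneg {M : Matrix n n ℂ} (h : M.PosSemidef) : 0 ≤ M.trace.re := by
  rw [Matrix.trace]
  have : (∑ i, M.diag i).re = ∑ i, (M i i).re := by
    simp [Complex.re_sum, Matrix.diag]
  rw [this]
  exact Finset.sum_nonneg fun i _ => psd_diag_nonneg h i

lemma traceNorm_eq_csqrt (A : Matrix n n ℂ) :
    traceNorm A = (CFC.sqrt (Aᴴ * A)).trace.re := by
  have hS := Matrix.posSemidef_conjTranspose_mul_self A
  rw [CFC.sqrt_eq_real_sqrt _ hS.nonneg, cfcₙ_eq_cfc, hS.1.cfc_eq]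
  rfl

lemma traceNorm_nonneg (A : Matrix n n ℂ) : 0 ≤ traceNorm A := by
  rw [traceNorm_eq_csqrt]
  exact psd_trace_re_nonneg (CFC.sqrt_nonneg _).posSemidef

end NN

open Matrix Complex
variable {n m : Type*} [Fintype n] [DecidableEq n] [Fintype m] [DecidableEq m]

noncomputable def en (x : n → ℂ) : ℝ := Real.sqrt (∑ i, Complex.normSq (x i))

lemma sum_normSq_nonneg (x : n → ℂ) : 0 ≤ ∑ i, Complex.normSq (x i) :=
  Finset.sum_nonneg fun i _ => Complex.normSq_nonneg _

lemma en_sq (x : n → ℂ) : en x ^ 2 = ∑ i, Complex.normSq (x i) :=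
  Real.sq_sqrt (sum_normSq_nonneg x)

lemma en_nonneg (x : n → ℂ) : 0 ≤ en x := Real.sqrt_nonneg _

lemma en_eq_zero_iff (x : n → ℂ) : en x = 0 ↔ x = 0 := by
  rw [en, Real.sqrt_eq_zero (sum_normSq_nonneg x)]
  constructor
  · intro h
    have := (Finset.sum_eq_zero_iff_of_nonneg (fun i _ => Complex.normSq_nonneg (x i))).mp h
    funext i
    exact Complex.normSq_eq_zero.mp (this i (Finset.mem_univ i))
  · rintro rfl; simp

lemma traceNorm_eq_of_sq {A B : Matrix n n ℂ} (hB : B.PosSemidef) (h : B ^ 2 = Aᴴ * A) :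
    traceNorm A = B.trace.re := by
  rw [traceNorm_eq_csqrt, CFC.sqrt_unique (b := B) (by rw [← h, sq]) hB.nonneg]

lemma posSemidef_smul_real {A : Matrix n n ℂ} (hA : A.PosSemidef) {r : ℝ} (hr : 0 ≤ r) :
    (((r : ℂ)) • A).PosSemidef := by
  refine Matrix.PosSemidef.of_dotProduct_mulVec_nonneg ?_ ?_
  · unfold Matrix.IsHermitian
    rw [conjTranspose_smul, hA.1.eq]; simp
  · intro x
    rw [smul_mulVec, dotProduct_smul, smul_eq_mul]
    exact mul_nonneg (by exact_mod_cast Complex.zero_le_real.mpr hr) (hA.dotProduct_mulVec_nonneg x)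

lemma posSemidef_vecMulVec_star (y : n → ℂ) : (Matrix.vecMulVec y (star y)).PosSemidef := by
  refine Matrix.PosSemidef.of_dotProduct_mulVec_nonneg ?_ ?_
  · ext i j
    simp [Matrix.conjTranspose_apply, Matrix.vecMulVec_apply, mul_comm]
  · intro x
    have : dotProduct (star x) (Matrix.vecMulVec y (star y) *ᵥ x)
        = star (dotProduct (star y) x) * (dotProduct (star y) x) := by
      simp only [dotProduct, Matrix.mulVec, Matrix.vecMulVec_apply, dotProduct,
        Pi.star_apply, star_sum, star_mul', star_star]
      rw [Finset.sum_mul]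
      refine Finset.sum_congr rfl fun i _ => ?_
      rw [Finset.mul_sum, Finset.mul_sum]
      refine Finset.sum_congr rfl fun j _ => ?_
      ring
    rw [this]
    exact star_mul_self_nonneg _

lemma vecMulVec_zero_left (y : n → ℂ) : Matrix.vecMulVec (0 : m → ℂ) y = 0 := by
  ext i j; simp [Matrix.vecMulVec_apply]

lemma vecMulVec_zero_right (x : m → ℂ) : Matrix.vecMulVec x (0 : n → ℂ) = 0 := by
  ext i j; simp [Matrix.vecMulVec_apply]

lemma smul_vecMulVec (c : ℂ) (x : m → ℂ) (y : n → ℂ) :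
    c • Matrix.vecMulVec x y = Matrix.vecMulVec (c • x) y := by
  ext i j; simp [Matrix.vecMulVec_apply]; ring

lemma traceNorm_zero : traceNorm (0 : Matrix n n ℂ) = 0 := by
  have : traceNorm (0 : Matrix n n ℂ) = (Matrix.trace (0 : Matrix n n ℂ)).re :=
    traceNorm_eq_of_sq (Matrix.PosSemidef.zero) (by simp [pow_two])
  simp [this]

lemma star_self_eq_normSq (z : ℂ) : star z * z = (Complex.normSq z : ℂ) := by
  rw [Complex.star_def, Complex.normSq_eq_conj_mul_self]

lemma traceNorm_vecMulVec (x y : n → ℂ) :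
    traceNorm (Matrix.vecMulVec x (star y)) = en x * en y := by
  by_cases hy : y = 0
  · subst hy
    rw [show (star (0 : n → ℂ)) = 0 from star_zero _, vecMulVec_zero_right, traceNorm_zero]
    simp [en]
  · set A := Matrix.vecMulVec x (star y) with hA
    have hey : en y ≠ 0 := fun h => hy ((en_eq_zero_iff y).mp h)
    set c : ℝ := en x / en y with hc
    have hc0 : 0 ≤ c := div_nonneg (en_nonneg _) (en_nonneg _)
    have hB : (((c : ℂ)) • Matrix.vecMulVec y (star y)).PosSemidef :=
      posSemidef_smul_real (posSemidef_vecMulVec_star y) hc0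
    have hsq : (((c : ℂ)) • Matrix.vecMulVec y (star y)) ^ 2 = Aᴴ * A := by
      ext i j
      simp only [pow_two, Matrix.smul_mul, Matrix.mul_smul, smul_smul, Matrix.smul_apply,
        Matrix.mul_apply, Matrix.conjTranspose_apply, Matrix.vecMulVec_apply, Pi.star_apply,
        smul_eq_mul, hA, star_mul', star_star]
      have h1 : ∀ k, (y i * star (y k)) * (y k * star (y j))
          = (y i * star (y j)) * ((Complex.normSq (y k) : ℂ)) := by
        intro k
        rw [← star_self_eq_normSq]; ring
      have h2 : ∀ k, (y i * star (x k)) * (x k * star (y j))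
          = (y i * star (y j)) * ((Complex.normSq (x k) : ℂ)) := by
        intro k
        rw [← star_self_eq_normSq]; ring
      have L : ∑ k, (c:ℂ)*(y i * star (y k)) * ((c:ℂ)*(y k * star (y j)))
          = ((c:ℂ)^2 * (y i * star (y j))) * ((∑ k, Complex.normSq (y k) : ℝ) : ℂ) := by
        have : ∀ k, (c:ℂ)*(y i * star (y k)) * ((c:ℂ)*(y k * star (y j)))
            = ((c:ℂ)^2 * (y i * star (y j))) * ((Complex.normSq (y k) : ℝ) : ℂ) := by
          intro k; rw [← star_self_eq_normSq]; ring
        rw [Finset.sum_congr rfl fun k _ => this k, ← Finset.mul_sum]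
        push_cast
        ring
      have R : ∑ k, star (x k) * y i * (x k * star (y j))
          = ((y i * star (y j))) * ((∑ k, Complex.normSq (x k) : ℝ) : ℂ) := by
        have : ∀ k, star (x k) * y i * (x k * star (y j))
            = ((y i * star (y j))) * ((Complex.normSq (x k) : ℝ) : ℂ) := by
          intro k; rw [← star_self_eq_normSq]; ring
        rw [Finset.sum_congr rfl fun k _ => this k, ← Finset.mul_sum]
        push_cast
        ring
      have key : ((c:ℝ)^2 * (∑ k, Complex.normSq (y k)) : ℝ) = (∑ k, Complex.normSq (x k) : ℝ) := by
        rw [← en_sq, ← en_sq, hc, div_pow, div_mul_cancel₀]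
        exact pow_ne_zero 2 hey
      calc ∑ k, (c:ℂ)*(y i * star (y k)) * ((c:ℂ)*(y k * star (y j)))
          = ((c:ℂ)^2 * (y i * star (y j))) * ((∑ k, Complex.normSq (y k) : ℝ) : ℂ) := L
        _ = ((y i * star (y j))) * ((((c:ℝ)^2 * (∑ k, Complex.normSq (y k)) : ℝ)) : ℂ) := by
            push_cast; ring
        _ = ((y i * star (y j))) * ((∑ k, Complex.normSq (x k) : ℝ) : ℂ) := by rw [key]
        _ = ∑ k, star (x k) * y i * (x k * star (y j)) := R.symm
    have htr : ((c : ℂ) • Matrix.vecMulVec y (star y)).trace = ((en x * en y : ℝ) : ℂ) := by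
      rw [Matrix.trace_smul]
      have : (Matrix.vecMulVec y (star y)).trace = ((∑ k, Complex.normSq (y k) : ℝ) : ℂ) := by
        rw [Matrix.trace]
        push_cast
        refine Finset.sum_congr rfl fun k _ => ?_
        rw [Matrix.diag_apply, Matrix.vecMulVec_apply, Pi.star_apply, mul_comm, star_self_eq_normSq]
      rw [this, smul_eq_mul, ← en_sq]
      have : c * en y ^ 2 = en x * en y := by
        rw [hc]; field_simp
      exact_mod_cast congrArg (Complex.ofReal ·) this
    rw [traceNorm_eq_of_sq hB hsq, htr, Complex.ofReal_re]

namespace Spec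
variable (A : Matrix n n ℂ)

noncomputable def hH : (Aᴴ * A).PosSemidef := Matrix.posSemidef_conjTranspose_mul_self A
noncomputable def eigb (j : n) : n → ℂ := ⇑((hH A).1.eigenvectorBasis j)
noncomputable def mu (j : n) : ℝ := (hH A).1.eigenvalues j

lemma sum_normSq_eigb (j : n) : ∑ i, Complex.normSq (eigb A j i) = 1 := by
  have hnorm : ‖(hH A).1.eigenvectorBasis j‖ = 1 :=
    (hH A).1.eigenvectorBasis.orthonormal.1 j
  have := EuclideanSpace.norm_eq ((hH A).1.eigenvectorBasis j)
  rw [hnorm] at this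
  have h2 : (1:ℝ) = Real.sqrt (∑ i, ‖eigb A j i‖ ^ 2) := this
  have h3 : ∑ i, ‖eigb A j i‖ ^ 2 = 1 := Real.sqrt_eq_one.mp h2.symm
  rw [← h3]
  refine Finset.sum_congr rfl fun i _ => ?_
  rw [Complex.normSq_eq_norm_sq]

lemma en_eigb (j : n) : en (eigb A j) = 1 := by
  rw [en, sum_normSq_eigb, Real.sqrt_one]

lemma mu_nonneg (j : n) : 0 ≤ mu A j := (hH A).eigenvalues_nonneg j

/-- Resolution of identity from the eigenvector unitary. -/
lemma sum_eigb_mul_conj (p q : n) :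
    ∑ j, eigb A j p * star (eigb A j q) = if p = q then 1 else 0 := by
  have hu : ((hH A).1.eigenvectorUnitary : Matrix n n ℂ)
      * star ((hH A).1.eigenvectorUnitary : Matrix n n ℂ) = 1 :=
    (Matrix.mem_unitaryGroup_iff).mp ((hH A).1.eigenvectorUnitary).2
  calc ∑ j, eigb A j p * star (eigb A j q)
      = (((hH A).1.eigenvectorUnitary : Matrix n n ℂ)
          * star ((hH A).1.eigenvectorUnitary : Matrix n n ℂ)) p q := by
        rw [Matrix.mul_apply]
        refine Finset.sum_congr rfl fun j _ => ?_
        rfl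
    _ = (1 : Matrix n n ℂ) p q := by rw [hu]
    _ = if p = q then 1 else 0 := Matrix.one_apply

/-- SVD-style decomposition. -/
lemma decomp : A = ∑ j, Matrix.vecMulVec (A *ᵥ eigb A j) (star (eigb A j)) := by
  ext p q
  rw [Matrix.sum_apply]
  simp only [Matrix.vecMulVec_apply, Matrix.mulVec, dotProduct, Pi.star_apply]
  calc A p q = ∑ k, A p k * (if k = q then 1 else 0) := by simp
    _ = ∑ k, A p k * (∑ j, eigb A j k * star (eigb A j q)) := by
        refine Finset.sum_congr rfl fun k _ => ?_
        rw [sum_eigb_mul_conj]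
    _ = _ := by
        rw [Finset.sum_congr rfl fun k (_ : k ∈ Finset.univ) =>
          Finset.mul_sum Finset.univ (fun j => eigb A j k * star (eigb A j q)) (A p k)]
        rw [Finset.sum_comm]
        refine Finset.sum_congr rfl fun j _ => ?_
        rw [Finset.sum_mul]
        refine Finset.sum_congr rfl fun k _ => ?_
        ring

lemma sum_normSq_mulVec (j : n) :
    ((∑ i, Complex.normSq ((A *ᵥ eigb A j) i) : ℝ) : ℂ) = ((mu A j : ℝ) : ℂ) := by
  have h1 : ((∑ i, Complex.normSq ((A *ᵥ eigb A j) i) : ℝ) : ℂ)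
      = dotProduct (star (A *ᵥ eigb A j)) (A *ᵥ eigb A j) := by
    rw [dotProduct]
    push_cast
    refine Finset.sum_congr rfl fun i _ => ?_
    rw [Pi.star_apply, star_self_eq_normSq]
  have hmv : (Aᴴ * A) *ᵥ eigb A j = (mu A j) • eigb A j :=
    (hH A).1.mulVec_eigenvectorBasis j
  have h2 : dotProduct (star (A *ᵥ eigb A j)) (A *ᵥ eigb A j)
      = dotProduct (star (eigb A j)) ((Aᴴ * A) *ᵥ eigb A j) := by
    rw [Matrix.star_mulVec, dotProduct_mulVec, Matrix.vecMul_vecMul, dotProduct_mulVec]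
  rw [h1, h2, hmv]
  have h4 : (mu A j) • eigb A j = fun i => (mu A j : ℂ) * eigb A j i := by
    funext i
    exact Complex.real_smul
  rw [h4, dotProduct]
  have h5 : ∀ i, star (eigb A j) i * ((mu A j : ℂ) * eigb A j i)
      = (mu A j : ℂ) * ((Complex.normSq (eigb A j i) : ℝ) : ℂ) := by
    intro i
    rw [Pi.star_apply, ← star_self_eq_normSq]
    ring
  rw [Finset.sum_congr rfl fun i _ => h5 i, ← Finset.mul_sum]
  have h6 : ∑ i, ((Complex.normSq (eigb A j i) : ℝ) : ℂ) = ((1:ℝ):ℂ) := by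
    rw [← Complex.ofReal_sum, sum_normSq_eigb A j]
  rw [h6]
  simp

lemma en_mulVec_eigb (j : n) : en (A *ᵥ eigb A j) = Real.sqrt (mu A j) := by
  rw [en]
  congr 1
  exact_mod_cast sum_normSq_mulVec A j

lemma traceNorm_eq_sum : traceNorm A = ∑ j, Real.sqrt (mu A j) := by
  rw [traceNorm, Matrix.trace_mul_cycle,
    Matrix.mem_unitaryGroup_iff'.mp ((hH A).1.eigenvectorUnitary).2, Matrix.one_mul,
    Matrix.trace_diagonal]
  rw [Complex.re_sum]
  refine Finset.sum_congr rfl fun j _ => ?_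
  simp [mu]

lemma sum_traceNorm_decomp :
    ∑ j, traceNorm (Matrix.vecMulVec (A *ᵥ eigb A j) (star (eigb A j))) = traceNorm A := by
  rw [traceNorm_eq_sum]
  refine Finset.sum_congr rfl fun j _ => ?_
  rw [traceNorm_vecMulVec, en_mulVec_eigb, en_eigb, mul_one]

end Spec


section MORE
variable {n m : Type*} [Fintype n] [DecidableEq n] [Fintype m] [DecidableEq m]

lemma rank_vecMulVec_eq_one {x : m → ℂ} {y : n → ℂ} (hx : x ≠ 0) (hy : y ≠ 0) :
    (Matrix.vecMulVec x y).rank = 1 := by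
  have hrange : LinearMap.range (Matrix.vecMulVec x y).mulVecLin = Submodule.span ℂ {x} := by
    apply le_antisymm
    · rintro _ ⟨v, rfl⟩
      have : (Matrix.vecMulVec x y).mulVecLin v = (dotProduct y v) • x := by
        funext i
        simp only [Matrix.mulVecLin_apply, Matrix.mulVec, dotProduct,
          Matrix.vecMulVec_apply, Pi.smul_apply, smul_eq_mul, Finset.sum_mul]
        refine Finset.sum_congr rfl fun j _ => ?_
        ring
      rw [this]
      exact Submodule.smul_mem _ _ (Submodule.mem_span_singleton_self x)
    · rw [Submodule.span_le, Set.singleton_subset_iff]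
      have hc : ((∑ j, Complex.normSq (y j) : ℝ) : ℂ) ≠ 0 := by
        rw [ne_eq, Complex.ofReal_eq_zero]
        intro h
        exact hy ((en_eq_zero_iff y).mp (by rw [en, h, Real.sqrt_zero]))
      refine ⟨(((∑ j, Complex.normSq (y j) : ℝ) : ℂ))⁻¹ • star y, ?_⟩
      funext i
      simp only [Matrix.mulVecLin_apply, Matrix.mulVec, dotProduct,
        Matrix.vecMulVec_apply, Pi.smul_apply, Pi.star_apply, smul_eq_mul]
      have : ∀ j, x i * y j * ((((∑ k, Complex.normSq (y k) : ℝ) : ℂ))⁻¹ * star (y j))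
          = (x i * (((∑ k, Complex.normSq (y k) : ℝ) : ℂ))⁻¹) * ((Complex.normSq (y j) : ℝ) : ℂ) := by
        intro j
        rw [← star_self_eq_normSq]
        ring
      rw [Finset.sum_congr rfl fun j _ => this j, ← Finset.mul_sum, ← Complex.ofReal_sum,
        mul_assoc, inv_mul_cancel₀ hc, mul_one]
  rw [Matrix.rank, hrange, finrank_span_singleton hx]

lemma kron_vecMulVec (x y : m → ℂ) (w z : n → ℂ) :
    (Matrix.vecMulVec x (star y)) ⊗ₖ (Matrix.vecMulVec w (star z))
      = Matrix.vecMulVec (fun p : m × n => x p.1 * w p.2)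
          (star (fun p : m × n => y p.1 * z p.2)) := by
  ext ⟨a, b⟩ ⟨c, d⟩
  simp only [Matrix.kroneckerMap_apply, Matrix.vecMulVec_apply, Pi.star_apply, star_mul']
  ring

lemma ne_zero_prod_fun {x : m → ℂ} {w : n → ℂ} (hx : x ≠ 0) (hw : w ≠ 0) :
    (fun p : m × n => x p.1 * w p.2) ≠ 0 := by
  obtain ⟨a, ha⟩ := Function.ne_iff.mp hx
  obtain ⟨b, hb⟩ := Function.ne_iff.mp hw
  exact Function.ne_iff.mpr ⟨(a, b), mul_ne_zero ha hb⟩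

end MORE

open Matrix Complex
variable {n m : Type*} [Fintype n] [DecidableEq n] [Fintype m] [DecidableEq m]

lemma traceNorm_real_smul (A : Matrix n n ℂ) {r : ℝ} (hr : 0 ≤ r) :
    traceNorm ((r : ℂ) • A) = r * traceNorm A := by
  have hS := (Matrix.posSemidef_conjTranspose_mul_self A)
  have hB : (((r:ℂ)) • CFC.sqrt (Aᴴ * A)).PosSemidef :=
    posSemidef_smul_real (CFC.sqrt_nonneg _).posSemidef hr
  have hsq : (((r:ℂ)) • CFC.sqrt (Aᴴ * A)) ^ 2 = ((r:ℂ) • A)ᴴ * ((r:ℂ) • A) := by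
    rw [Matrix.conjTranspose_smul, Matrix.smul_mul, Matrix.mul_smul, smul_smul]
    rw [pow_two, Matrix.smul_mul, Matrix.mul_smul, smul_smul, CFC.sqrt_mul_sqrt_self _ hS.nonneg]
    congr 1
    rw [star_def, Complex.conj_ofReal]
  rw [traceNorm_eq_of_sq hB hsq, Matrix.trace_smul, smul_eq_mul, Complex.re_ofReal_mul]
  rw [traceNorm_eq_csqrt]

section gcnstuff
variable {d₁ d₂ : ℕ}

def gcnSet (T : Matrix (Fin d₁ × Fin d₂) (Fin d₁ × Fin d₂) ℂ) : Set ℝ :=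
  { r : ℝ | ∃ (n : ℕ) (u : Fin n → Matrix (Fin d₁) (Fin d₁) ℂ)
      (v : Fin n → Matrix (Fin d₂) (Fin d₂) ℂ),
      T = ∑ i, u i ⊗ₖ v i ∧ r = ∑ i, traceNorm (u i) * traceNorm (v i) }

lemma gcn_eq (T : Matrix (Fin d₁ × Fin d₂) (Fin d₁ × Fin d₂) ℂ) : gcn T = sInf (gcnSet T) := rfl

lemma mem_gcnSet_of {ι : Type*} [Fintype ι] {T : Matrix (Fin d₁ × Fin d₂) (Fin d₁ × Fin d₂) ℂ}
    (u : ι → Matrix (Fin d₁) (Fin d₁) ℂ) (v : ι → Matrix (Fin d₂) (Fin d₂) ℂ)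
    (h : T = ∑ i, u i ⊗ₖ v i) :
    (∑ i, traceNorm (u i) * traceNorm (v i)) ∈ gcnSet T := by
  let e := Fintype.equivFin ι
  refine ⟨Fintype.card ι, u ∘ e.symm, v ∘ e.symm, ?_, ?_⟩
  · rw [h]
    exact (Equiv.sum_comp e.symm fun i => u i ⊗ₖ v i).symm
  · exact (Equiv.sum_comp e.symm fun i => traceNorm (u i) * traceNorm (v i)).symm

lemma nonneg_of_mem_gcnSet {T : Matrix (Fin d₁ × Fin d₂) (Fin d₁ × Fin d₂) ℂ} {r : ℝ}
    (h : r ∈ gcnSet T) : 0 ≤ r := by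
  obtain ⟨k, u, v, -, rfl⟩ := h
  exact Finset.sum_nonneg fun i _ => mul_nonneg (traceNorm_nonneg _) (traceNorm_nonneg _)

lemma bddBelow_gcnSet (T : Matrix (Fin d₁ × Fin d₂) (Fin d₁ × Fin d₂) ℂ) :
    BddBelow (gcnSet T) := ⟨0, fun _ h => nonneg_of_mem_gcnSet h⟩

lemma gcnSet_nonempty (T : Matrix (Fin d₁ × Fin d₂) (Fin d₁ × Fin d₂) ℂ) :
    (gcnSet T).Nonempty := by
  refine ⟨_, mem_gcnSet_of (ι := Fin d₁ × Fin d₁)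
    (fun p => Matrix.single p.1 p.2 1)
    (fun p => Matrix.of fun b d => T (p.1, b) (p.2, d)) ?_⟩
  ext ⟨a, b⟩ ⟨c, d⟩
  rw [Matrix.sum_apply]
  rw [Finset.sum_eq_single (a, c)]
  · simp [Matrix.kroneckerMap_apply, Matrix.single]
  · rintro ⟨i, k⟩ - hp
    simp only [Matrix.kroneckerMap_apply, Matrix.single, Matrix.of_apply]
    rw [if_neg]
    · simp
    · rintro ⟨rfl, rfl⟩; exact hp rfl
  · intro h; exact absurd (Finset.mem_univ _) h

lemma gcn_nonneg (T : Matrix (Fin d₁ × Fin d₂) (Fin d₁ × Fin d₂) ℂ) : 0 ≤ gcn T :=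
  le_csInf (gcnSet_nonempty T) fun _ h => nonneg_of_mem_gcnSet h

lemma gcn_le_of_mem {T : Matrix (Fin d₁ × Fin d₂) (Fin d₁ × Fin d₂) ℂ} {r : ℝ}
    (h : r ∈ gcnSet T) : gcn T ≤ r := csInf_le (bddBelow_gcnSet T) h

lemma gcn_zero : gcn (0 : Matrix (Fin d₁ × Fin d₂) (Fin d₁ × Fin d₂) ℂ) = 0 := by
  refine le_antisymm ?_ (gcn_nonneg 0)
  have := mem_gcnSet_of (ι := Fin 0) (T := (0 : Matrix (Fin d₁ × Fin d₂) (Fin d₁ × Fin d₂) ℂ))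
    (fun i => 0) (fun i => 0) (by simp)
  simpa using gcn_le_of_mem this

lemma gcn_le_single (a : Matrix (Fin d₁) (Fin d₁) ℂ) (b : Matrix (Fin d₂) (Fin d₂) ℂ) :
    gcn (a ⊗ₖ b) ≤ traceNorm a * traceNorm b := by
  have := mem_gcnSet_of (ι := Fin 1) (T := a ⊗ₖ b) (fun _ => a) (fun _ => b) (by simp)
  simpa using gcn_le_of_mem this

lemma gcn_add_le (T₁ T₂ : Matrix (Fin d₁ × Fin d₂) (Fin d₁ × Fin d₂) ℂ) :
    gcn (T₁ + T₂) ≤ gcn T₁ + gcn T₂ := by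
  refine le_of_forall_pos_le_add fun ε hε => ?_
  obtain ⟨r₁, hr₁, hlt₁⟩ := exists_lt_of_csInf_lt (gcnSet_nonempty T₁)
    (lt_add_of_pos_right (gcn T₁) (by positivity : (0:ℝ) < ε/2))
  obtain ⟨r₂, hr₂, hlt₂⟩ := exists_lt_of_csInf_lt (gcnSet_nonempty T₂)
    (lt_add_of_pos_right (gcn T₂) (by positivity : (0:ℝ) < ε/2))
  obtain ⟨n₁, u₁, v₁, hT₁, rfl⟩ := hr₁
  obtain ⟨n₂, u₂, v₂, hT₂, rfl⟩ := hr₂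
  have hmem := mem_gcnSet_of (ι := Fin n₁ ⊕ Fin n₂) (T := T₁ + T₂)
    (Sum.elim u₁ u₂) (Sum.elim v₁ v₂) ?_
  · have := gcn_le_of_mem hmem
    rw [Fintype.sum_sum_type] at this
    simp only [Sum.elim_inl, Sum.elim_inr] at this
    linarith
  · rw [hT₁, hT₂, Fintype.sum_sum_type]
    simp

lemma gcn_smul_le (T : Matrix (Fin d₁ × Fin d₂) (Fin d₁ × Fin d₂) ℂ) {r : ℝ} (hr : 0 ≤ r) :
    gcn ((r : ℂ) • T) ≤ r * gcn T := by
  rcases eq_or_lt_of_le hr with rfl | hr'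
  · push_cast
    rw [zero_smul, gcn_zero, zero_mul]
  refine le_of_forall_pos_le_add fun ε hε => ?_
  obtain ⟨w, hw, hlt⟩ := exists_lt_of_csInf_lt (gcnSet_nonempty T)
    (lt_add_of_pos_right (gcn T) (by positivity : (0:ℝ) < ε/r))
  obtain ⟨k, u, v, hT, rfl⟩ := hw
  have hmem := mem_gcnSet_of (ι := Fin k) (T := (r:ℂ) • T)
    (fun i => (r:ℂ) • u i) v ?_
  · have h2 := gcn_le_of_mem hmem
    have h3 : ∑ i, traceNorm ((r:ℂ) • u i) * traceNorm (v i)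
        = r * ∑ i, traceNorm (u i) * traceNorm (v i) := by
      rw [Finset.mul_sum]
      refine Finset.sum_congr rfl fun i _ => ?_
      rw [traceNorm_real_smul _ hr, mul_assoc]
    rw [h3] at h2
    calc gcn ((r:ℂ) • T) ≤ r * ∑ i, traceNorm (u i) * traceNorm (v i) := h2
      _ ≤ r * (gcn T + ε / r) := by
          exact mul_le_mul_of_nonneg_left hlt.le hr
      _ = r * gcn T + ε := by field_simp
  · rw [hT, Finset.smul_sum]
    refine Finset.sum_congr rfl fun i _ => ?_
    rw [Matrix.smul_kronecker]

lemma gcn_sum_le {ι : Type*} (s : Finset ι) (T : ι → Matrix (Fin d₁ × Fin d₂) (Fin d₁ × Fin d₂) ℂ) :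
    gcn (∑ i ∈ s, T i) ≤ ∑ i ∈ s, gcn (T i) := by
  induction s using Finset.cons_induction with
  | empty => simp [gcn_zero]
  | cons a s ha ih =>
    rw [Finset.sum_cons, Finset.sum_cons]
    exact (gcn_add_le _ _).trans (add_le_add le_rfl ih)

end gcnstuff

lemma sum_kronecker_sum {ι κ : Type*} [Fintype ι] [Fintype κ] {d₁ d₂ : ℕ}
    (A : ι → Matrix (Fin d₁) (Fin d₁) ℂ) (B : κ → Matrix (Fin d₂) (Fin d₂) ℂ) :
    (∑ a, A a) ⊗ₖ (∑ b, B b) = ∑ a, ∑ b, A a ⊗ₖ B b := by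
  ext ⟨p, q⟩ ⟨p', q'⟩
  rw [Matrix.sum_apply]
  simp only [Matrix.kroneckerMap_apply, Matrix.sum_apply, Finset.sum_mul, Finset.mul_sum]
  rw [Finset.sum_comm]

section Alpha
variable {d₁ d₂ : ℕ}

def alphaSet (σ : Matrix (Fin d₁ × Fin d₂) (Fin d₁ × Fin d₂) ℂ) : Set ℝ :=
  { r : ℝ | ∃ (n : ℕ) (lam : Fin n → ℝ)
        (S : Fin n → Matrix (Fin d₁ × Fin d₂) (Fin d₁ × Fin d₂) ℂ),
        (∀ i, 0 ≤ lam i) ∧ (∀ i, (S i).rank = 1) ∧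
        σ = ∑ i, ((lam i : ℝ) : ℂ) • S i ∧
        r = ∑ i, lam i * gcn (S i) }

lemma mem_alphaSet_of {ι : Type*} [Fintype ι] {σ : Matrix (Fin d₁ × Fin d₂) (Fin d₁ × Fin d₂) ℂ}
    (lam : ι → ℝ) (S : ι → Matrix (Fin d₁ × Fin d₂) (Fin d₁ × Fin d₂) ℂ)
    (h0 : ∀ i, 0 ≤ lam i) (h1 : ∀ i, (S i).rank = 1)
    (h2 : σ = ∑ i, ((lam i : ℝ) : ℂ) • S i) :
    (∑ i, lam i * gcn (S i)) ∈ alphaSet σ := by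
  let e := Fintype.equivFin ι
  refine ⟨Fintype.card ι, lam ∘ e.symm, S ∘ e.symm, fun i => h0 _, fun i => h1 _, ?_, ?_⟩
  · rw [h2]
    exact (Equiv.sum_comp e.symm fun i => ((lam i : ℝ) : ℂ) • S i).symm
  · exact (Equiv.sum_comp e.symm fun i => lam i * gcn (S i)).symm

lemma nonneg_of_mem_alphaSet {σ : Matrix (Fin d₁ × Fin d₂) (Fin d₁ × Fin d₂) ℂ} {r : ℝ}
    (h : r ∈ alphaSet σ) : 0 ≤ r := by
  obtain ⟨k, lam, S, h0, -, -, rfl⟩ := h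
  exact Finset.sum_nonneg fun i _ => mul_nonneg (h0 i) (gcn_nonneg _)

lemma bddBelow_alphaSet (σ : Matrix (Fin d₁ × Fin d₂) (Fin d₁ × Fin d₂) ℂ) :
    BddBelow (alphaSet σ) := ⟨0, fun _ h => nonneg_of_mem_alphaSet h⟩

lemma exists_alpha_le {σ : Matrix (Fin d₁ × Fin d₂) (Fin d₁ × Fin d₂) ℂ} {r : ℝ}
    (hr : r ∈ gcnSet σ) : ∃ a ∈ alphaSet σ, a ≤ r := by
  obtain ⟨k, u, v, hσ, rfl⟩ := hr
  by_cases hne : Nonempty (Fin d₁ × Fin d₂)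
  swap
  · -- degenerate case: σ = 0
    have h0 : (0 : ℝ) ∈ alphaSet σ := by
      refine ⟨0, fun i => 0, fun i => 0, fun i => i.elim0, fun i => i.elim0, ?_, by simp⟩
      ext p q
      exact absurd (Nonempty.intro p) hne
    exact ⟨0, h0, Finset.sum_nonneg fun i _ =>
      mul_nonneg (traceNorm_nonneg _) (traceNorm_nonneg _)⟩
  obtain ⟨p0⟩ := hne
  -- SVD-type decompositions of each factor
  set x₁ : Fin k → Fin d₁ → Fin d₁ → ℂ := fun i a => u i *ᵥ Spec.eigb (u i) a with hx₁
  set y₁ : Fin k → Fin d₁ → Fin d₁ → ℂ := fun i a => Spec.eigb (u i) a with hy₁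
  set x₂ : Fin k → Fin d₂ → Fin d₂ → ℂ := fun i b => v i *ᵥ Spec.eigb (v i) b with hx₂
  set y₂ : Fin k → Fin d₂ → Fin d₂ → ℂ := fun i b => Spec.eigb (v i) b with hy₂
  set P : Fin k → Fin d₁ → Matrix (Fin d₁) (Fin d₁) ℂ :=
    fun i a => Matrix.vecMulVec (x₁ i a) (star (y₁ i a)) with hP
  set Q : Fin k → Fin d₂ → Matrix (Fin d₂) (Fin d₂) ℂ :=
    fun i b => Matrix.vecMulVec (x₂ i b) (star (y₂ i b)) with hQ
  have hu : ∀ i, u i = ∑ a, P i a := fun i => Spec.decomp (u i)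
  have hv : ∀ i, v i = ∑ b, Q i b := fun i => Spec.decomp (v i)
  have hut : ∀ i, ∑ a, traceNorm (P i a) = traceNorm (u i) :=
    fun i => Spec.sum_traceNorm_decomp (u i)
  have hvt : ∀ i, ∑ b, traceNorm (Q i b) = traceNorm (v i) :=
    fun i => Spec.sum_traceNorm_decomp (v i)
  set ι := Fin k × Fin d₁ × Fin d₂
  set lam : ι → ℝ := fun t => traceNorm (P t.1 t.2.1) * traceNorm (Q t.1 t.2.2) with hlam
  have hlam0 : ∀ t, 0 ≤ lam t :=
    fun t => mul_nonneg (traceNorm_nonneg _) (traceNorm_nonneg _)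
  set E : Matrix (Fin d₁ × Fin d₂) (Fin d₁ × Fin d₂) ℂ :=
    Matrix.vecMulVec (Pi.single p0 1) (star (Pi.single p0 (1:ℂ))) with hE
  have hErank : E.rank = 1 := by
    have h1 : (Pi.single p0 (1:ℂ) : Fin d₁ × Fin d₂ → ℂ) ≠ 0 := by
      intro h
      have := congrFun h p0
      simp at this
    exact rank_vecMulVec_eq_one h1 (by simpa using star_ne_zero.mpr h1)
  set S : ι → Matrix (Fin d₁ × Fin d₂) (Fin d₁ × Fin d₂) ℂ :=
    fun t => if lam t = 0 then E
      else (((lam t)⁻¹ : ℝ) : ℂ) • (P t.1 t.2.1 ⊗ₖ Q t.1 t.2.2) with hS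
  -- each lam • S equals the Kronecker term
  have hlamS : ∀ t : ι, ((lam t : ℝ) : ℂ) • S t = P t.1 t.2.1 ⊗ₖ Q t.1 t.2.2 := by
    rintro ⟨i, a, b⟩
    by_cases h : lam (i, a, b) = 0
    · have hK0 : P i a ⊗ₖ Q i b = 0 := by
        have hor : traceNorm (P i a) = 0 ∨ traceNorm (Q i b) = 0 := mul_eq_zero.mp h
        rcases hor with h' | h'
        · have hP' : en (x₁ i a) * en (y₁ i a) = 0 := by
            rw [← traceNorm_vecMulVec]; exact h'
          have hP0 : P i a = 0 := by
            show Matrix.vecMulVec (x₁ i a) (star (y₁ i a)) = 0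
            rcases mul_eq_zero.mp hP' with h'' | h''
            · rw [(en_eq_zero_iff _).mp h'', vecMulVec_zero_left]
            · rw [(en_eq_zero_iff _).mp h'', star_zero, vecMulVec_zero_right]
          rw [hP0, Matrix.zero_kronecker]
        · have hQ' : en (x₂ i b) * en (y₂ i b) = 0 := by
            rw [← traceNorm_vecMulVec]; exact h'
          have hQ0 : Q i b = 0 := by
            show Matrix.vecMulVec (x₂ i b) (star (y₂ i b)) = 0
            rcases mul_eq_zero.mp hQ' with h'' | h''
            · rw [(en_eq_zero_iff _).mp h'', vecMulVec_zero_left]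
            · rw [(en_eq_zero_iff _).mp h'', star_zero, vecMulVec_zero_right]
          rw [hQ0, Matrix.kronecker_zero]
      simp only [hS, hK0, h, Complex.ofReal_zero, zero_smul, if_true]
    · simp only [hS, h, if_false]
      rw [smul_smul, ← Complex.ofReal_mul, mul_inv_cancel₀ h]
      simp
  have hrank : ∀ t : ι, (S t).rank = 1 := by
    rintro ⟨i, a, b⟩
    by_cases h : lam (i, a, b) = 0
    · simp only [hS, h, if_true]; exact hErank
    · simp only [hS, h, if_false]
      have hPn : en (x₁ i a) * en (y₁ i a) ≠ 0 := by
        rw [← traceNorm_vecMulVec]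
        exact fun h' => h (by simp only [hlam]; rw [show traceNorm (P i a) = 0 from h', zero_mul])
      have hQn : en (x₂ i b) * en (y₂ i b) ≠ 0 := by
        rw [← traceNorm_vecMulVec]
        exact fun h' => h (by simp only [hlam]; rw [show traceNorm (Q i b) = 0 from h', mul_zero])
      have hx1 : x₁ i a ≠ 0 := fun h' => hPn (by rw [h', (en_eq_zero_iff _).mpr rfl, zero_mul])
      have hy1 : y₁ i a ≠ 0 := fun h' => hPn (by rw [h', (en_eq_zero_iff _).mpr rfl, mul_zero])
      have hx2 : x₂ i b ≠ 0 := fun h' => hQn (by rw [h', (en_eq_zero_iff _).mpr rfl, zero_mul])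
      have hy2 : y₂ i b ≠ 0 := fun h' => hQn (by rw [h', (en_eq_zero_iff _).mpr rfl, mul_zero])
      have hPQ : P i a ⊗ₖ Q i b = Matrix.vecMulVec
          (fun p : Fin d₁ × Fin d₂ => x₁ i a p.1 * x₂ i b p.2)
          (star (fun p : Fin d₁ × Fin d₂ => y₁ i a p.1 * y₂ i b p.2)) := kron_vecMulVec _ _ _ _
      rw [hPQ, smul_vecMulVec]
      refine rank_vecMulVec_eq_one ?_ ?_
      · have hX := ne_zero_prod_fun hx1 hx2
        intro h'
        apply hX
        funext p
        have := congrFun h' p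
        simp only [Pi.smul_apply, smul_eq_mul, Pi.zero_apply] at this ⊢
        rcases mul_eq_zero.mp this with h'' | h''
        · exact absurd (Complex.ofReal_eq_zero.mp h'') (inv_ne_zero h)
        · exact h''
      · have hY := ne_zero_prod_fun hy1 hy2
        intro h'
        apply hY
        have := congrArg star h'
        rwa [star_star, star_zero] at this
  have hσ2 : σ = ∑ t : ι, ((lam t : ℝ) : ℂ) • S t := by
    rw [Finset.sum_congr rfl fun t _ => hlamS t]
    rw [hσ]
    rw [Fintype.sum_prod_type]
    refine Finset.sum_congr rfl fun i _ => ?_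
    rw [Fintype.sum_prod_type]
    rw [hu i, hv i]
    rw [sum_kronecker_sum]
  refine ⟨∑ t : ι, lam t * gcn (S t), mem_alphaSet_of lam S hlam0 hrank hσ2, ?_⟩
  have hterm : ∀ t : ι, lam t * gcn (S t) ≤ lam t := by
    rintro ⟨i, a, b⟩
    by_cases h : lam (i, a, b) = 0
    · rw [h, zero_mul]
    · have hl : 0 < lam (i, a, b) := lt_of_le_of_ne (hlam0 _) (Ne.symm h)
      have : gcn (S (i, a, b)) ≤ 1 := by
        simp only [hS, h, if_false]
        have := gcn_le_single ((((lam (i,a,b))⁻¹ : ℝ) : ℂ) • P i a) (Q i b)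
        rw [Matrix.smul_kronecker] at this
        refine this.trans ?_
        rw [traceNorm_real_smul _ (inv_nonneg.mpr (hlam0 _))]
        rw [mul_assoc, hlam]
        rw [inv_mul_cancel₀ h]
      calc lam (i,a,b) * gcn (S (i,a,b)) ≤ lam (i,a,b) * 1 :=
            mul_le_mul_of_nonneg_left this (hlam0 _)
        _ = lam (i,a,b) := mul_one _
  refine (Finset.sum_le_sum fun t _ => hterm t).trans ?_
  rw [hlam]
  rw [Fintype.sum_prod_type]
  refine Finset.sum_le_sum fun i _ => ?_
  rw [Fintype.sum_prod_type]
  have : ∑ a, ∑ b, traceNorm (P i a) * traceNorm (Q i b)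
      = (∑ a, traceNorm (P i a)) * (∑ b, traceNorm (Q i b)) := by
    rw [Finset.sum_mul]
    refine Finset.sum_congr rfl fun a _ => ?_
    rw [Finset.mul_sum]
  rw [this, hut i, hvt i]

end Alpha
end Aux

/-- The infimum `α(σ)` of `Σᵢ λᵢ ‖Sᵢ‖_γ` over finite decompositions `σ = Σᵢ λᵢ Sᵢ` with
`λᵢ ≥ 0` and each `Sᵢ` of rank one, coincides with the greatest cross norm `‖σ‖_γ`. -/
theorem alpha_eq_gcn (d₁ d₂ : ℕ) (σ : Matrix (Fin d₁ × Fin d₂) (Fin d₁ × Fin d₂) ℂ) :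
    sInf { r : ℝ | ∃ (n : ℕ) (lam : Fin n → ℝ)
        (S : Fin n → Matrix (Fin d₁ × Fin d₂) (Fin d₁ × Fin d₂) ℂ),
        (∀ i, 0 ≤ lam i) ∧ (∀ i, (S i).rank = 1) ∧
        σ = ∑ i, ((lam i : ℝ) : ℂ) • S i ∧
        r = ∑ i, lam i * gcn (S i) } = gcn σ := by
  show sInf (Aux.alphaSet σ) = gcn σ
  have h1 : sInf (Aux.alphaSet σ) ≤ gcn σ := by
    refine le_csInf (Aux.gcnSet_nonempty σ) fun r hr => ?_
    obtain ⟨a, ha, hle⟩ := Aux.exists_alpha_le hr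
    exact (csInf_le (Aux.bddBelow_alphaSet σ) ha).trans hle
  have h2 : gcn σ ≤ sInf (Aux.alphaSet σ) := by
    have hne : (Aux.alphaSet σ).Nonempty := by
      obtain ⟨r, hr⟩ := Aux.gcnSet_nonempty σ
      obtain ⟨a, ha, -⟩ := Aux.exists_alpha_le hr
      exact ⟨a, ha⟩
    refine le_csInf hne ?_
    rintro r ⟨n, lam, S, hlam, hrank, hσ, rfl⟩
    calc gcn σ = gcn (∑ i, ((lam i : ℝ) : ℂ) • S i) := by rw [hσ]
      _ ≤ ∑ i, gcn (((lam i : ℝ) : ℂ) • S i) := Aux.gcn_sum_le _ _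
      _ ≤ ∑ i, lam i * gcn (S i) :=
          Finset.sum_le_sum fun i _ => Aux.gcn_smul_le _ (hlam i)
  exact le_antisymm h1 h2
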